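/- arXiv:math/9912051 — 4 statements merged into one kernel-verified Lean document; each statement's English description precedes it below -/
import Mathlib

section
/- Let P be an invertible matrix over the integers (i.e., P ∈ GL_ℓ(ℤ)). Then all eigenvalues of P are roots of unity if and only if all eigenvalues of P have absolute value 1. -/
/-!
Every eigenvalue `z` of an integer matrix is a root of its monic characteristic polynomial, and so
is every conjugate of `z`, i.e. every image of `z` under an embedding `ℚ(z) → ℂ`. If all these have
absolute value 1, Kronecker's theorem turns the algebraic integer `z` into a root of unity.
-/

open Polynomial IntermediateField

theorem Polynomial.Monic.exists_pow_eq_one_of_forall_norm_root_eq_one {p : ℤ[X]} (hp : p.Monic)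
    (h : ∀ z : ℂ, aeval z p = 0 → ‖z‖ = 1) {z : ℂ} (hz : aeval z p = 0) :
    ∃ n : ℕ, 0 < n ∧ z ^ n = 1 := by
  have hzQ : IsIntegral ℚ z := IsIntegral.tower_top (A := ℚ) ⟨p, hp, hz⟩
  let K := ℚ⟮z⟯
  have : FiniteDimensional ℚ K := adjoin.finiteDimensional hzQ
  have : NumberField K := ⟨⟩
  let x : K := AdjoinSimple.gen ℚ z
  have hx : aeval x p = 0 :=
    (algebraMap K ℂ).injective (by rw [← aeval_algebraMap_apply, map_zero]; exact hz)
  have hconj : ∀ φ : K →+* ℂ, ‖φ x‖ = 1 := fun φ =>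
    h _ (by rw [← φ.toIntAlgHom_apply, aeval_algHom_apply, hx, map_zero])
  obtain ⟨n, hn, hxn⟩ := NumberField.Embeddings.pow_eq_one_of_norm_eq_one K ℂ ⟨p, hp, hx⟩ hconj
  exact ⟨n, hn, by simpa [x] using congrArg (algebraMap K ℂ) hxn⟩

theorem Matrix.isRoot_charpoly_map_intCast_iff {ι R : Type*} [Fintype ι] [DecidableEq ι]
    [CommRing R] (P : Matrix ι ι ℤ) (z : R) :
    (P.map (Int.cast : ℤ → R)).charpoly.IsRoot z ↔ aeval z P.charpoly = 0 := by
  rw [IsRoot, ← eval_map_algebraMap, algebraMap_int_eq, ← charpoly_map]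
  rfl

theorem quasiUnipotent_iff_abs_eigenvalues_one_general (ℓ : ℕ)
    (P : Matrix (Fin ℓ) (Fin ℓ) ℤ) :
    (∀ z : ℂ, ((P.map (Int.cast : ℤ → ℂ)).charpoly).IsRoot z → ∃ n : ℕ, 0 < n ∧ z ^ n = 1) ↔
    (∀ z : ℂ, ((P.map (Int.cast : ℤ → ℂ)).charpoly).IsRoot z → ‖z‖ = 1) := by
  simp only [Matrix.isRoot_charpoly_map_intCast_iff]
  constructor
  · intro h z hz
    obtain ⟨n, hn, hzn⟩ := h z hz
    exact Complex.norm_eq_one_of_pow_eq_one hzn hn.ne'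
  · exact fun h z hz => P.charpoly_monic.exists_pow_eq_one_of_forall_norm_root_eq_one h hz

/-- For an invertible integer matrix `P` (i.e. `P ∈ GL_ℓ(ℤ)`),
all complex eigenvalues of `P` are roots of unity iff they all have absolute value 1. -/
theorem quasiUnipotent_iff_abs_eigenvalues_one (ℓ : ℕ)
    (P : Matrix (Fin ℓ) (Fin ℓ) ℤ) (hP : IsUnit P.det) :
    (∀ z : ℂ, ((P.map (Int.cast : ℤ → ℂ)).charpoly).IsRoot z → ∃ n : ℕ, 0 < n ∧ z ^ n = 1) ↔
    (∀ z : ℂ, ((P.map (Int.cast : ℤ → ℂ)).charpoly).IsRoot z → ‖z‖ = 1) :=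
  quasiUnipotent_iff_abs_eigenvalues_one_general ℓ P
end

section
/- Let B: V × ⋯ × V → ℝ be a symmetric n-linear form on a real vector space V, let P: V → V be a linear map preserving B in the sense that B(Pv₁,…,Pvₙ) = B(v₁,…,vₙ) for all vᵢ, and suppose P = I + N with N^{k+1} = 0 for some k > 0. Then for any vector D, if (i₁,…,iₙ) are natural numbers with each iⱼ ≤ k and i₁ + ⋯ + iₙ > k(n−1), then B(N^{i₁}D, N^{i₂}D, …, N^{iₙ}D) = 0. -/
/-- Let `B` be a symmetric `n`-linear real form preserved by a unipotent
map `P = I + N` with `N^(k+1) = 0`, `k > 0`. If `i₁,…,iₙ ≤ k` and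
`i₁ + ⋯ + iₙ > k(n−1)`, then `B(N^{i₁}D, …, N^{iₙ}D) = 0`. -/
theorem multilinear_vanishing_of_large_weight
    {V : Type*} [AddCommGroup V] [Module ℝ V] (n : ℕ)
    (B : MultilinearMap ℝ (fun _ : Fin n => V) ℝ)
    (hsymm : ∀ (e : Equiv.Perm (Fin n)) (v : Fin n → V), B (v ∘ e) = B v)
    (P : Module.End ℝ V)
    (hinv : ∀ v : Fin n → V, B (fun i => P (v i)) = B v)
    (N : Module.End ℝ V) (hPN : P = 1 + N) (k : ℕ) (hk : 0 < k)
    (hN : N ^ (k + 1) = 0) (D : V) :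
    ∀ i : Fin n → ℕ, (∀ j, i j ≤ k) → k * (n - 1) < ∑ j, i j →
      B (fun j => (N ^ (i j)) D) = 0 := by
  suffices H : ∀ d : ℕ, ∀ i : Fin n → ℕ, (∀ j, i j ≤ k) → k * (n - 1) < ∑ j, i j →
      n * k ^ 2 - ∑ j, (i j) ^ 2 ≤ d → B (fun j => (N ^ (i j)) D) = 0 by
    intro i h1 h2
    exact H (n * k ^ 2 - ∑ j, (i j) ^ 2) i h1 h2 le_rfl
  intro d
  induction d using Nat.strong_induction_on with
  | _ d IH =>
  intro i hik hsum hd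
  -- n is positive
  have hn : 0 < n := by
    rcases Nat.eq_zero_or_pos n with h0 | h
    · exfalso; subst h0; simp at hsum
    · exact h
  -- minimal index j₀
  obtain ⟨j₀, -, hj₀min⟩ :=
    Finset.exists_min_image Finset.univ i ⟨⟨0, hn⟩, Finset.mem_univ _⟩
  have hj₀min' : ∀ j, i j₀ ≤ i j := fun j => hj₀min j (Finset.mem_univ j)
  -- the minimum is at least 1
  have hpos : 1 ≤ i j₀ := by
    by_contra hcon
    have h0 : i j₀ = 0 := by omega
    have h1 : i j₀ + ∑ j ∈ Finset.univ.erase j₀, i j = ∑ j, i j :=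
      Finset.add_sum_erase _ _ (Finset.mem_univ j₀)
    have h2 : ∑ j ∈ Finset.univ.erase j₀, i j ≤ (Finset.univ.erase j₀).card • k :=
      Finset.sum_le_card_nsmul _ _ _ (fun x _ => hik x)
    have h3 : (Finset.univ.erase j₀).card = n - 1 := by
      rw [Finset.card_erase_of_mem (Finset.mem_univ _), Finset.card_univ, Fintype.card_fin]
    rw [h3, smul_eq_mul] at h2
    have hsum2 := hsum
    rw [Nat.mul_comm k (n - 1)] at hsum2
    omega
  obtain ⟨a, ha⟩ : ∃ a, i j₀ = a + 1 := ⟨i j₀ - 1, by omega⟩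
  -- decremented tuple
  set c : Fin n → ℕ := fun j => if j = j₀ then a else i j with hc
  set v : Fin n → V := fun j => (N ^ (c j)) D with hv
  set w : Fin n → V := fun j => (N ^ (c j + 1)) D with hw
  have hcj₀ : c j₀ = a := if_pos rfl
  have hceq : ∀ j, j ≠ j₀ → c j = i j := fun j hj => if_neg hj
  have hPv : (fun j : Fin n => P (v j)) = w + v := by
    funext j
    show P ((N ^ (c j)) D) = (N ^ (c j + 1)) D + (N ^ (c j)) D
    rw [hPN, LinearMap.add_apply, Module.End.one_apply, pow_succ' N (c j), Module.End.mul_apply]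
    exact add_comm _ _
  have hexp := B.map_add_univ w v
  rw [← hPv] at hexp
  rw [hinv v] at hexp
  -- hexp : B v = ∑ s : Finset (Fin n), B (s.piecewise w v)
  have hsplit : B ((∅ : Finset (Fin n)).piecewise w v)
      + ∑ s ∈ Finset.univ.erase (∅ : Finset (Fin n)), B (s.piecewise w v)
      = ∑ s : Finset (Fin n), B (s.piecewise w v) :=
    Finset.add_sum_erase _ (fun s : Finset (Fin n) => B (s.piecewise w v)) (Finset.mem_univ _)
  rw [Finset.piecewise_empty, ← hexp] at hsplit
  have hzero_sum : ∑ s ∈ Finset.univ.erase (∅ : Finset (Fin n)), B (s.piecewise w v) = 0 := by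
    linarith
  have hmem : ({j₀} : Finset (Fin n)) ∈ Finset.univ.erase (∅ : Finset (Fin n)) := by
    simp
  have hsplit2 : B (({j₀} : Finset (Fin n)).piecewise w v)
      + ∑ s ∈ (Finset.univ.erase (∅ : Finset (Fin n))).erase {j₀}, B (s.piecewise w v)
      = ∑ s ∈ Finset.univ.erase (∅ : Finset (Fin n)), B (s.piecewise w v) :=
    Finset.add_sum_erase _ (fun s : Finset (Fin n) => B (s.piecewise w v)) hmem
  rw [hzero_sum] at hsplit2
  have htarget : ({j₀} : Finset (Fin n)).piecewise w v = fun j => (N ^ (i j)) D := by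
    funext j
    by_cases hj : j = j₀
    · subst hj
      rw [Finset.piecewise_eq_of_mem _ _ _ (Finset.mem_singleton_self _)]
      show (N ^ (c j + 1)) D = (N ^ (i j)) D
      have h1 : c j + 1 = i j := by rw [hcj₀]; omega
      rw [h1]
    · rw [Finset.piecewise_eq_of_notMem _ _ _ (by simp [hj])]
      show (N ^ (c j)) D = (N ^ (i j)) D
      rw [hceq j hj]
  -- every other term vanishes
  have hterm : ∀ s ∈ (Finset.univ.erase (∅ : Finset (Fin n))).erase {j₀},
      B (s.piecewise w v) = 0 := by
    intro s hs
    obtain ⟨hne_sing, hs'⟩ := Finset.mem_erase.mp hs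
    obtain ⟨hne_empty, -⟩ := Finset.mem_erase.mp hs'
    set e : Fin n → ℕ := fun j => c j + (if j ∈ s then 1 else 0) with he
    have heval : ∀ j, e j = c j + (if j ∈ s then 1 else 0) := fun j => rfl
    have heq : s.piecewise w v = fun j => (N ^ (e j)) D := by
      funext j
      by_cases hj : j ∈ s
      · rw [Finset.piecewise_eq_of_mem _ _ _ hj]
        show (N ^ (c j + 1)) D = (N ^ (e j)) D
        have h1 : e j = c j + 1 := by rw [heval j, if_pos hj]
        rw [h1]
      · rw [Finset.piecewise_eq_of_notMem _ _ _ hj]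
        show (N ^ (c j)) D = (N ^ (e j)) D
        have h1 : e j = c j := by rw [heval j, if_neg hj]; omega
        rw [h1]
    rw [heq]
    by_cases hbig : ∃ j, k + 1 ≤ e j
    · obtain ⟨j, hj⟩ := hbig
      have hz : (N ^ (e j)) D = 0 := by
        have h1 : N ^ (e j) = N ^ (e j - (k + 1)) * N ^ (k + 1) := by
          rw [← pow_add]; congr 1; omega
        rw [h1, hN, mul_zero, LinearMap.zero_apply]
      exact B.map_coord_zero j hz
    · push_neg at hbig
      have hek : ∀ j, e j ≤ k := fun j => by have := hbig j; omega
      -- a second element of s distinct from j₀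
      obtain ⟨j₁, hj₁s, hj₁ne⟩ : ∃ j₁ ∈ s, j₁ ≠ j₀ := by
        by_contra hcon
        push_neg at hcon
        exact hne_sing (Finset.eq_singleton_iff_nonempty_unique_mem.mpr
          ⟨Finset.nonempty_of_ne_empty hne_empty, hcon⟩)
      have hj₁' : j₁ ∈ Finset.univ.erase j₀ := Finset.mem_erase.mpr ⟨hj₁ne, Finset.mem_univ _⟩
      -- sum of c
      have hsum_c : c j₀ + ∑ j ∈ Finset.univ.erase j₀, c j = ∑ j, c j :=
        Finset.add_sum_erase _ _ (Finset.mem_univ _)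
      have hsum_i : i j₀ + ∑ j ∈ Finset.univ.erase j₀, i j = ∑ j, i j :=
        Finset.add_sum_erase _ _ (Finset.mem_univ _)
      have hce : ∑ j ∈ Finset.univ.erase j₀, c j = ∑ j ∈ Finset.univ.erase j₀, i j :=
        Finset.sum_congr rfl (fun j hj => hceq j (Finset.ne_of_mem_erase hj))
      have hcard : 1 ≤ s.card :=
        Finset.card_pos.mpr (Finset.nonempty_of_ne_empty hne_empty)
      -- sum of e
      have hsum_e : ∑ j, e j = (∑ j, c j) + s.card := by
        have h0 : ∑ j, e j = ∑ j, (c j + if j ∈ s then 1 else 0) := rfl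
        rw [h0, Finset.sum_add_distrib]
        congr 1
        rw [Finset.sum_ite_mem, Finset.univ_inter]
        simp
      have hsum' : k * (n - 1) < ∑ j, e j := by
        have h2 : ∑ j, c j + 1 = ∑ j, i j := by omega
        calc k * (n - 1) < ∑ j, i j := hsum
          _ = ∑ j, c j + 1 := h2.symm
          _ ≤ ∑ j, c j + s.card := by omega
          _ = ∑ j, e j := hsum_e.symm
      -- the measure strictly increases
      have hej₁ : e j₁ = i j₁ + 1 := by
        rw [heval j₁, if_pos hj₁s, hceq j₁ hj₁ne]
      have hej₁sq : (e j₁) ^ 2 = (i j₁ + 1) ^ 2 := by rw [hej₁]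
      have hej₀ : a ≤ e j₀ := by
        have h1 := heval j₀
        rw [hcj₀] at h1
        omega
      have hej₀sq : a ^ 2 ≤ (e j₀) ^ 2 := Nat.pow_le_pow_left hej₀ 2
      have hkey : (i j₀) ^ 2 + (i j₁) ^ 2 < a ^ 2 + (i j₁ + 1) ^ 2 := by
        have hb : a + 1 ≤ i j₁ := ha ▸ hj₀min' j₁
        rw [ha]
        nlinarith [hb]
      have hrest : ∑ j ∈ (Finset.univ.erase j₀).erase j₁, (i j) ^ 2
          ≤ ∑ j ∈ (Finset.univ.erase j₀).erase j₁, (e j) ^ 2 := by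
        refine Finset.sum_le_sum fun j hj => Nat.pow_le_pow_left ?_ 2
        have h1 := heval j
        have h2 : c j = i j := hceq j (Finset.ne_of_mem_erase (Finset.mem_of_mem_erase hj))
        omega
      have di1 : ∑ j, (i j) ^ 2 = (i j₀) ^ 2 + ∑ j ∈ Finset.univ.erase j₀, (i j) ^ 2 :=
        (Finset.add_sum_erase _ (fun j => (i j) ^ 2) (Finset.mem_univ j₀)).symm
      have di2 : ∑ j ∈ Finset.univ.erase j₀, (i j) ^ 2
          = (i j₁) ^ 2 + ∑ j ∈ (Finset.univ.erase j₀).erase j₁, (i j) ^ 2 :=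
        (Finset.add_sum_erase _ (fun j => (i j) ^ 2) hj₁').symm
      have de1 : ∑ j, (e j) ^ 2 = (e j₀) ^ 2 + ∑ j ∈ Finset.univ.erase j₀, (e j) ^ 2 :=
        (Finset.add_sum_erase _ (fun j => (e j) ^ 2) (Finset.mem_univ j₀)).symm
      have de2 : ∑ j ∈ Finset.univ.erase j₀, (e j) ^ 2
          = (e j₁) ^ 2 + ∑ j ∈ (Finset.univ.erase j₀).erase j₁, (e j) ^ 2 :=
        (Finset.add_sum_erase _ (fun j => (e j) ^ 2) hj₁').symm
      have hmeas : ∑ j, (i j) ^ 2 < ∑ j, (e j) ^ 2 := by omega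
      have hbound : ∑ j, (e j) ^ 2 ≤ n * k ^ 2 := by
        calc ∑ j, (e j) ^ 2 ≤ Finset.univ.card • (k ^ 2) :=
              Finset.sum_le_card_nsmul _ _ _ (fun x _ => Nat.pow_le_pow_left (hek x) 2)
          _ = n * k ^ 2 := by rw [Finset.card_univ, Fintype.card_fin, smul_eq_mul]
      have hd' : n * k ^ 2 - ∑ j, (e j) ^ 2 < d := by omega
      exact IH _ hd' e hek hsum' le_rfl
  rw [htarget, Finset.sum_eq_zero hterm] at hsplit2
  linarith
end

section
/- Let B: V × ⋯ × V → ℝ be a symmetric n-linear form preserved by a unipotent linear map P = I + N with N^{k+1} = 0, and let D ∈ V. Define Δ_m = ∑_{j=0}^{m-1} P^j D. Then the function m ↦ B(Δ_m, Δ_m, …, Δ_m) (n arguments) is a polynomial in m of degree at most k(n−1) + n. -/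
/-!
Put `f m = B (Δ_m, …, Δ_m)`, where `Δ_m = orbitSum P D m`. Since `P Δ_m = Δ_{m+1} - D`,
invariance gives `f m = B (Δ_{m+1} - D, …, Δ_{m+1} - D)`. Expanding by multilinearity, the term
with every slot equal to `Δ_{m+1}` is `f (m + 1)`, so the forward difference `f (m + 1) - f m`
is a sum of terms with at most `n - 1` slots equal to `Δ_{m+1}` and the others equal to `-D`.
The `(k + 2)`-nd forward difference of `m ↦ Δ_m` is `m ↦ P^m N^{k+1} D = 0`, so by the
Gregory–Newton formula `Δ_m` is a combination of the binomials `m.choose i`, `i ≤ k + 1`, with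
coefficients in `V`. Hence each term of the forward difference is a polynomial in `m` of degree
at most `(n - 1)(k + 1)`, and `f` one of degree at most `(n - 1)(k + 1) + 1 = k(n - 1) + n`.
-/

open Polynomial Finset Function fwdDiff

lemma fwdDiff_iter_comp_addMonoidHom {M M' G : Type*} [AddCommMonoid M] [AddCommMonoid M']
    [AddCommGroup G] (φ : M →+ M') (h : M) (g : M' → G) (n : ℕ) :
    Δ_[h] ^[n] (g ∘ φ) = (Δ_[φ h] ^[n] g) ∘ φ := by
  induction n with
  | zero => rfl
  | succ n ih =>
    rw [iterate_succ_apply', iterate_succ_apply', ih]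
    ext x
    simp [fwdDiff]

lemma apply_eq_sum_choose_of_fwdDiff_iter_eq_zero {G : Type*} [AddCommGroup G] {f : ℕ → G}
    {d : ℕ} (hf : Δ_[1] ^[d + 1] f = 0) (m : ℕ) :
    f m = ∑ i ∈ range (d + 1), m.choose i • Δ_[1] ^[i] f 0 := by
  have hvanish : ∀ i ≥ d + 1, Δ_[1] ^[i] f = 0 := fun i hi => by
    obtain ⟨j, rfl⟩ := Nat.exists_eq_add_of_le hi
    rw [add_comm, iterate_add_apply, hf]
    exact iterate_fixed (fwdDiff_const 1 (0 : G)) j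
  calc f m = ∑ i ∈ range (m + 1), m.choose i • Δ_[1] ^[i] f 0 := by
        simpa using shift_eq_sum_fwdDiff_iter 1 f m 0
    _ = ∑ i ∈ range (m + 1 + (d + 1)), m.choose i • Δ_[1] ^[i] f 0 :=
        (eventually_constant_sum (fun i hi => by rw [Nat.choose_eq_zero_of_lt hi, zero_smul])
          (Nat.le_add_right _ _)).symm
    _ = ∑ i ∈ range (d + 1), m.choose i • Δ_[1] ^[i] f 0 :=
        eventually_constant_sum (fun i hi => by rw [hvanish i hi, Pi.zero_apply, smul_zero])
          (Nat.le_add_left _ _)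

section PolyFun

variable (K : Type*) [Field K]

noncomputable def polyFunDegLE (d : ℕ) : Submodule K (ℕ → K) :=
  (degreeLE K d).map (LinearMap.pi fun m : ℕ => leval (m : K))

variable {K}

lemma mem_polyFunDegLE {f : ℕ → K} {d : ℕ} :
    f ∈ polyFunDegLE K d ↔ ∃ p : K[X], p.natDegree ≤ d ∧ ∀ m : ℕ, p.eval (m : K) = f m := by
  simp [polyFunDegLE, mem_degreeLE, natDegree_le_iff_degree_le, funext_iff]

lemma polyFunDegLE_mono {d e : ℕ} (h : d ≤ e) : polyFunDegLE K d ≤ polyFunDegLE K e :=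
  Submodule.map_mono (degreeLE_mono (by exact_mod_cast h))

lemma const_mem_polyFunDegLE (c : K) : (fun _ => c) ∈ polyFunDegLE K 0 :=
  mem_polyFunDegLE.2 ⟨C c, by simp, by simp⟩

lemma mul_mem_polyFunDegLE {f g : ℕ → K} {d e : ℕ} (hf : f ∈ polyFunDegLE K d)
    (hg : g ∈ polyFunDegLE K e) : f * g ∈ polyFunDegLE K (d + e) := by
  obtain ⟨p, hp, hpf⟩ := mem_polyFunDegLE.1 hf
  obtain ⟨q, hq, hqg⟩ := mem_polyFunDegLE.1 hg
  exact mem_polyFunDegLE.2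
    ⟨p * q, natDegree_mul_le.trans (add_le_add hp hq), fun m => by simp [hpf, hqg]⟩

lemma prod_mem_polyFunDegLE {α : Type*} (s : Finset α) {f : α → ℕ → K} {d : α → ℕ}
    (hf : ∀ a ∈ s, f a ∈ polyFunDegLE K (d a)) :
    ∏ a ∈ s, f a ∈ polyFunDegLE K (∑ a ∈ s, d a) := by
  induction s using Finset.cons_induction with
  | empty => exact const_mem_polyFunDegLE 1
  | cons a s ha ih =>
    rw [prod_cons, sum_cons]
    exact mul_mem_polyFunDegLE (hf a (mem_cons_self a s))
      (ih fun b hb => hf b (mem_cons_of_mem hb))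

variable [CharZero K]

lemma choose_mem_polyFunDegLE (r : ℕ) : (fun m => (m.choose r : K)) ∈ polyFunDegLE K r := by
  refine mem_polyFunDegLE.2 ⟨C (r.factorial : K)⁻¹ * descPochhammer K r,
    natDegree_mul_le.trans (by simp [descPochhammer_natDegree]), fun m => ?_⟩
  rw [eval_mul, eval_C, descPochhammer_eval_eq_descFactorial,
    Nat.descFactorial_eq_factorial_mul_choose, Nat.cast_mul,
    inv_mul_cancel_left₀ (by exact_mod_cast r.factorial_ne_zero)]

lemma mem_polyFunDegLE_iff_fwdDiff_iter_eq_zero {f : ℕ → K} {d : ℕ} :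
    f ∈ polyFunDegLE K d ↔ Δ_[1] ^[d + 1] f = 0 := by
  constructor
  · intro hf
    obtain ⟨p, hp, rfl⟩ : ∃ p : K[X], p.natDegree ≤ d ∧ p.eval ∘ Nat.castAddMonoidHom K = f := by
      simpa [funext_iff] using mem_polyFunDegLE.1 hf
    rw [fwdDiff_iter_comp_addMonoidHom, Nat.coe_castAddMonoidHom, Nat.cast_one,
      fwdDiff_iter_eq_zero_of_degree_lt (by omega)]
    rfl
  · intro hf
    have hsum : f = ∑ i ∈ range (d + 1), Δ_[1] ^[i] f 0 • fun m => (m.choose i : K) := by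
      ext m
      simp [apply_eq_sum_choose_of_fwdDiff_iter_eq_zero hf m, nsmul_eq_mul, mul_comm]
    rw [hsum]
    exact Submodule.sum_mem _ fun i hi => Submodule.smul_mem _ _
      (polyFunDegLE_mono (Nat.lt_succ_iff.1 (mem_range.1 hi)) (choose_mem_polyFunDegLE i))

lemma mem_polyFunDegLE_succ_of_fwdDiff_mem {f : ℕ → K} {d : ℕ}
    (hf : Δ_[1] f ∈ polyFunDegLE K d) : f ∈ polyFunDegLE K (d + 1) := by
  rw [mem_polyFunDegLE_iff_fwdDiff_iter_eq_zero, iterate_succ_apply]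
  exact mem_polyFunDegLE_iff_fwdDiff_iter_eq_zero.1 hf

theorem MultilinearMap.apply_mem_polyFunDegLE {ι V : Type*} [Fintype ι] [DecidableEq ι]
    [AddCommGroup V] [Module K V] (B : MultilinearMap K (fun _ : ι => V) K) {v : ι → ℕ → V}
    {d : ι → ℕ} (hv : ∀ i, Δ_[1] ^[d i + 1] (v i) = 0) :
    (fun m => B (fun i => v i m)) ∈ polyFunDegLE K (∑ i, d i) := by
  have hexpand : (fun m => B (fun i => v i m)) =
      ∑ r ∈ Fintype.piFinset fun i => Finset.range (d i + 1),
        B (fun i => Δ_[1] ^[r i] (v i) 0) • ∏ i, fun m => (m.choose (r i) : K) := by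
    ext m
    simp_rw [apply_eq_sum_choose_of_fwdDiff_iter_eq_zero (hv _) m, ← Nat.cast_smul_eq_nsmul K,
      B.map_sum_finset, B.map_smul_univ, Finset.sum_apply, Pi.smul_apply, Finset.prod_apply,
      smul_eq_mul, mul_comm]
  rw [hexpand]
  refine Submodule.sum_mem _ fun r hr => Submodule.smul_mem _ _ ?_
  refine polyFunDegLE_mono (sum_le_sum fun i _ => ?_)
    (prod_mem_polyFunDegLE _ fun i _ => choose_mem_polyFunDegLE (r i))
  exact Nat.lt_succ_iff.1 (mem_range.1 (Fintype.mem_piFinset.1 hr i))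

theorem MultilinearMap.piecewise_mem_polyFunDegLE {ι V : Type*} [Fintype ι] [DecidableEq ι]
    [AddCommGroup V] [Module K V] (B : MultilinearMap K (fun _ : ι => V) K) {v : ℕ → V} {d : ℕ}
    (hv : Δ_[1] ^[d + 1] v = 0) (s : Finset ι) (w : V) :
    (fun m => B (s.piecewise (fun _ => v m) (fun _ => w))) ∈ polyFunDegLE K (#s * d) := by
  have h := B.apply_mem_polyFunDegLE (v := fun i m => s.piecewise (fun _ => v m) (fun _ => w) i)
    (d := fun i => if i ∈ s then d else 0) fun i => by
      by_cases hi : i ∈ s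
      · simpa [hi] using hv
      · simp only [hi, piecewise_eq_of_notMem _ _ _ hi, if_false, zero_add, iterate_one,
          fwdDiff_const]
        rfl
  simpa [Finset.sum_ite_mem] using h

end PolyFun

section OrbitSum

variable {R V : Type*} [CommRing R] [AddCommGroup V] [Module R V]

def orbitSum (P : Module.End R V) (D : V) (m : ℕ) : V := ∑ j ∈ range m, (P ^ j) D

variable (P : Module.End R V) (D : V)

lemma apply_orbitSum (m : ℕ) : P (orbitSum P D m) = orbitSum P D (m + 1) - D := by
  simp [orbitSum, sum_range_succ', map_sum, pow_succ']

lemma fwdDiff_orbitSum : Δ_[1] (orbitSum P D) = fun m => (P ^ m) D := by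
  ext m
  simp [fwdDiff, orbitSum, sum_range_succ]

lemma fwdDiff_iter_pow_apply (w : V) (i : ℕ) :
    Δ_[1] ^[i] (fun m => (P ^ m) w) = fun m => (P ^ m) (((P - 1) ^ i) w) := by
  induction i with
  | zero => simp
  | succ i ih =>
    rw [iterate_succ_apply', ih]
    ext m
    rw [fwdDiff, pow_succ, pow_succ' (P - 1), Module.End.mul_apply, Module.End.mul_apply,
      LinearMap.sub_apply, Module.End.one_apply, map_sub]

lemma fwdDiff_iter_orbitSum_eq_zero {k : ℕ} (h : (P - 1) ^ (k + 1) = 0) :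
    Δ_[1] ^[k + 2] (orbitSum P D) = 0 := by
  rw [iterate_succ_apply, fwdDiff_orbitSum, fwdDiff_iter_pow_apply, h]
  ext
  simp

theorem MultilinearMap.fwdDiff_apply_orbitSum {ι M : Type*} [Fintype ι] [DecidableEq ι]
    [AddCommGroup M] [Module R M] (B : MultilinearMap R (fun _ : ι => V) M)
    (hB : ∀ v : ι → V, B (fun i => P (v i)) = B v) :
    Δ_[1] (fun m => B (fun _ => orbitSum P D m)) =
      -∑ s ∈ univ.erase univ,
        fun m => B (s.piecewise (fun _ => orbitSum P D (m + 1)) (fun _ => -D)) := by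
  ext m
  rw [Pi.neg_apply, Finset.sum_apply]
  have hexpand : B (fun _ => orbitSum P D m) = B (fun _ => orbitSum P D (m + 1)) +
      ∑ s ∈ univ.erase univ, B (s.piecewise (fun _ => orbitSum P D (m + 1)) (fun _ => -D)) := by
    calc B (fun _ => orbitSum P D m) = B (fun _ => P (orbitSum P D m)) := (hB _).symm
      _ = B ((fun _ => orbitSum P D (m + 1)) + fun _ => -D) := by
        simp_rw [apply_orbitSum, sub_eq_add_neg]; rfl
      _ = _ := by
        rw [B.map_add_univ, ← add_sum_erase _ _ (mem_univ univ), piecewise_univ]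
  rw [fwdDiff, hexpand]
  abel

end OrbitSum

theorem selfIntersection_polynomial_degree_bound_general
    {V : Type*} [AddCommGroup V] [Module ℝ V] (n : ℕ)
    (B : MultilinearMap ℝ (fun _ : Fin n => V) ℝ)
    (P : Module.End ℝ V)
    (hinv : ∀ v : Fin n → V, B (fun i => P (v i)) = B v)
    (N : Module.End ℝ V) (hPN : P = 1 + N) (k : ℕ)
    (hN : N ^ (k + 1) = 0) (D : V) :
    ∃ p : Polynomial ℝ, p.natDegree ≤ k * (n - 1) + n ∧
      ∀ m : ℕ, B (fun _ => ∑ j ∈ Finset.range m, (P ^ j) D) = p.eval (m : ℝ) := by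
  suffices h : (fun m => B (fun _ => orbitSum P D m)) ∈ polyFunDegLE ℝ (k * (n - 1) + n) by
    obtain ⟨p, hp, hpB⟩ := mem_polyFunDegLE.1 h
    exact ⟨p, hp, fun m => (hpB m).symm⟩
  rcases n with _ | n
  · have hconst : (fun m => B (fun _ => orbitSum P D m)) = fun _ => B 0 :=
      funext fun _ => congrArg B (Subsingleton.elim _ _)
    exact hconst ▸ polyFunDegLE_mono (Nat.zero_le _) (const_mem_polyFunDegLE _)
  have hshift : Δ_[1] ^[k + 2] (fun m => orbitSum P D (m + 1)) = 0 := by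
    ext m
    rw [fwdDiff_iter_comp_add,
      fwdDiff_iter_orbitSum_eq_zero P D (by rwa [hPN, add_sub_cancel_left])]
    rfl
  have hdiff : Δ_[1] (fun m => B (fun _ => orbitSum P D m)) ∈ polyFunDegLE ℝ (n * (k + 1)) := by
    rw [B.fwdDiff_apply_orbitSum P D hinv]
    refine neg_mem (Submodule.sum_mem _ fun s hs => polyFunDegLE_mono ?_
      (B.piecewise_mem_polyFunDegLE hshift s (-D)))
    have hs : #s < n + 1 := by simpa using (card_lt_iff_ne_univ s).2 (ne_of_mem_erase hs)
    exact Nat.mul_le_mul_right _ (Nat.lt_succ_iff.1 hs)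
  refine polyFunDegLE_mono (le_of_eq ?_) (mem_polyFunDegLE_succ_of_fwdDiff_mem hdiff)
  rw [add_tsub_cancel_right]
  ring

/-- For a symmetric `n`-linear form `B` preserved by a unipotent `P = I + N`
with `N^(k+1) = 0`, and `Δ_m = ∑_{j<m} P^j D`, the function `m ↦ B(Δ_m, …, Δ_m)` is a
polynomial in `m` of degree at most `k(n−1) + n`. -/
theorem selfIntersection_polynomial_degree_bound
    {V : Type*} [AddCommGroup V] [Module ℝ V] (n : ℕ)
    (B : MultilinearMap ℝ (fun _ : Fin n => V) ℝ)
    (hsymm : ∀ (e : Equiv.Perm (Fin n)) (v : Fin n → V), B (v ∘ e) = B v)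
    (P : Module.End ℝ V)
    (hinv : ∀ v : Fin n → V, B (fun i => P (v i)) = B v)
    (N : Module.End ℝ V) (hPN : P = 1 + N) (k : ℕ)
    (hN : N ^ (k + 1) = 0) (D : V) :
    ∃ p : Polynomial ℝ, p.natDegree ≤ k * (n - 1) + n ∧
      ∀ m : ℕ, B (fun _ => ∑ j ∈ Finset.range m, (P ^ j) D) = p.eval (m : ℝ) :=
  selfIntersection_polynomial_degree_bound_general n B P hinv N hPN k hN D
end

section
/- Let P = I + N be a unipotent linear map on ℝ^d with N^{k+1} = 0 and N^k ≠ 0, and suppose there is a bilinear pairing ⟨·,·⟩ and elements E, C with ⟨N^k E, C⟩ > 0, preserved in the sense ⟨P^m w, C⟩ defined for all m. Let D satisfy: ⟨P^m(ℓD − E), C⟩ > 0 for all m ≥ 0 for some fixed ℓ > 0 (ampleness of ℓD − E). Then N^k D ≠ 0. -/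
/-!
If `N ^ k D = 0`, then `N ^ k (l • D - E) = -N ^ k E`, a vector fixed by `P = 1 + N`. Since the
forward difference of `m ↦ ⟨P ^ m v, C⟩` is `m ↦ ⟨P ^ m (N v), C⟩`, the `k`-th difference of
`m ↦ ⟨P ^ m (l • D - E), C⟩` is the negative constant `-⟨N ^ k E, C⟩`, and a sequence whose
`k`-th difference is eventually below a negative constant is eventually negative.
-/

open Filter fwdDiff

theorem tendsto_atBot_of_fwdDiff_le {f : ℕ → ℝ} {c : ℝ} (hc : c < 0)
    (hf : ∀ᶠ m in atTop, Δ_[1] f m ≤ c) : Tendsto f atTop atBot := by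
  obtain ⟨M, hM⟩ := eventually_atTop.mp hf
  have hlin : ∀ n : ℕ, f (n + M) ≤ f M + n * c := by
    intro n
    induction n with
    | zero => simp
    | succ n ih =>
      have := hM (n + M) (by omega)
      simp only [fwdDiff] at this
      push_cast
      rw [add_right_comm]
      linarith
  refine (tendsto_add_atTop_iff_nat M).mp (tendsto_atBot_mono hlin ?_)
  exact tendsto_atBot_add_const_left _ _
    (tendsto_natCast_atTop_atTop.atTop_mul_const_of_neg hc)

theorem eventually_le_of_fwdDiff_iter_le {c : ℝ} (hc : c < 0) (j : ℕ) {f : ℕ → ℝ}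
    (hf : ∀ᶠ m in atTop, (Δ_[1])^[j] f m ≤ c) : ∀ᶠ m in atTop, f m ≤ c := by
  induction j generalizing f with
  | zero => exact hf
  | succ j ih =>
    exact (tendsto_atBot_of_fwdDiff_le hc (ih hf)).eventually_le_atBot c

section OneAddPow

variable {R V G F : Type*} [Semiring R] [AddCommGroup V] [Module R V] [AddCommGroup G]
  [FunLike F V G] [AddMonoidHomClass F V G]

theorem fwdDiff_pow_one_add_apply (φ : F) (N : Module.End R V) (v : V) :
    Δ_[1] (fun m : ℕ => φ (((1 + N) ^ m) v)) = fun m => φ (((1 + N) ^ m) (N v)) := by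
  funext m
  simp [fwdDiff, pow_succ, Module.End.mul_apply]

theorem fwdDiff_iter_pow_one_add_apply (φ : F) (N : Module.End R V) (j : ℕ) (v : V) :
    (Δ_[1])^[j] (fun m : ℕ => φ (((1 + N) ^ m) v)) =
      fun m => φ (((1 + N) ^ m) ((N ^ j) v)) := by
  induction j generalizing v with
  | zero => simp
  | succ j ih =>
    rw [Function.iterate_succ_apply, fwdDiff_pow_one_add_apply, ih, pow_succ,
      Module.End.mul_apply]

theorem pow_one_add_apply_pow_eq_self {N : Module.End R V} {k : ℕ} (hN : N ^ (k + 1) = 0)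
    (m : ℕ) (v : V) : ((1 + N) ^ m) ((N ^ k) v) = (N ^ k) v := by
  have hfix : Function.IsFixedPt ⇑(1 + N) ((N ^ k) v) := by
    rw [Function.IsFixedPt, LinearMap.add_apply, Module.End.one_apply, ← Module.End.mul_apply,
      ← pow_succ', hN]
    simp
  rw [Module.End.pow_apply]
  exact hfix.iterate m

end OneAddPow

theorem Nk_ample_ne_zero_general
    {V W : Type*} [AddCommGroup V] [Module ℝ V] [AddCommGroup W] [Module ℝ W]
    (pair : V →ₗ[ℝ] W →ₗ[ℝ] ℝ)
    (P N : Module.End ℝ V) (hPN : P = 1 + N) (k : ℕ)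
    (hN : N ^ (k + 1) = 0)
    (E : V) (C : W) (hE : 0 < pair ((N ^ k) E) C)
    (D : V) (l : ℝ)
    (hamp : ∀ m : ℕ, 0 < pair ((P ^ m) (l • D - E)) C) :
    (N ^ k) D ≠ 0 := by
  intro hD
  subst hPN
  have hdiff : ∀ m, (Δ_[1])^[k] (fun m : ℕ => pair.flip C (((1 + N) ^ m) (l • D - E))) m
      = -pair ((N ^ k) E) C := by
    intro m
    rw [fwdDiff_iter_pow_one_add_apply]
    dsimp only
    rw [pow_one_add_apply_pow_eq_self hN]
    simp [hD]
  obtain ⟨m, hm⟩ := (eventually_le_of_fwdDiff_iter_le (neg_lt_zero.mpr hE) k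
    (Eventually.of_forall fun m => (hdiff m).le)).exists
  rw [LinearMap.flip_apply] at hm
  linarith [hamp m]

/-- Let `P = I + N` be unipotent with `N^(k+1) = 0`, `N^k ≠ 0`, and a
bilinear pairing with `⟨N^k E, C⟩ > 0`. If `⟨P^m (ℓ·D − E), C⟩ > 0` for all `m ≥ 0`
for some fixed `ℓ > 0`, then `N^k D ≠ 0`. -/
theorem Nk_ample_ne_zero
    {V W : Type*} [AddCommGroup V] [Module ℝ V] [AddCommGroup W] [Module ℝ W]
    (pair : V →ₗ[ℝ] W →ₗ[ℝ] ℝ)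
    (P N : Module.End ℝ V) (hPN : P = 1 + N) (k : ℕ)
    (hN : N ^ (k + 1) = 0) (hNk : N ^ k ≠ 0)
    (E : V) (C : W) (hE : 0 < pair ((N ^ k) E) C)
    (D : V) (l : ℝ) (hl : 0 < l)
    (hamp : ∀ m : ℕ, 0 < pair ((P ^ m) (l • D - E)) C) :
    (N ^ k) D ≠ 0 :=
  Nk_ample_ne_zero_general pair P N hPN k hN E C hE D l hamp
end
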